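/- Let f : ℝ → ℝ be integrable with ∫_ℝ f = 0 and x ↦ |x| f(x) integrable. Then Φ_f has finite limits at ±∞, given by lim_{x→+∞} Φ_f(x) = 4π ∫_0^∞ y f(y) dy and lim_{x→−∞} Φ_f(x) = −4π ∫_{−∞}^0 y f(y) dy; in particular the dipolar moment Φ_f(+∞) − Φ_f(−∞) equals 4π ∫_ℝ y f(y) dy. -/

import Mathlib

open MeasureTheory Real Filter

/-- The primitive `W_f(x) = ∫_{-∞}^x f(y) dy`. -/
noncomputable def W (f : ℝ → ℝ) (x : ℝ) : ℝ := ∫ y in Set.Iic x, f y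

/-- The mean-field potential `Φ_f(x) = -4π ∫_0^x W_f(y) dy`. -/
noncomputable def Phi (f : ℝ → ℝ) (x : ℝ) : ℝ := -4 * π * ∫ y in (0:ℝ)..x, W f y

/-!
`W_f` is absolutely continuous with `W_f' = f` almost everywhere, so integration by parts gives
`∫_0^x W_f = x W_f(x) - ∫_0^x t f(t) dt`. Neutrality turns `x W_f(x)` into `-x ∫_x^∞ f` for
`x → +∞`, while `x W_f(x) = x ∫_{-∞}^x f` for `x → -∞`; in both cases the integrand is
dominated by `|t f(t)|` on the region of integration, so `x W_f(x) → 0` by dominated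
convergence.
-/

open Topology

section

variable {f : ℝ → ℝ}

theorem W_eq_add_intervalIntegral (hf : Integrable f) (a x : ℝ) :
    W f x = W f a + ∫ t in a..x, f t := by
  rw [← intervalIntegral.integral_Iic_sub_Iic hf.integrableOn hf.integrableOn, W, W]
  ring

theorem absolutelyContinuousOnInterval_W (hf : Integrable f) (a b : ℝ) :
    AbsolutelyContinuousOnInterval (W f) a b := by
  have hV := (hf.intervalIntegrable (a := a) (b := b))
    |>.absolutelyContinuousOnInterval_intervalIntegral (c := a) Set.left_mem_uIcc
  rw [show W f = fun x => W f a + ∫ t in a..x, f t from funext (W_eq_add_intervalIntegral hf a)]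
  exact (contDiffOn_const (c := W f a)).absolutelyContinuousOnInterval.add hV

theorem ae_deriv_W (hf : Integrable f) : ∀ᵐ x, deriv (W f) x = f x := by
  filter_upwards [LocallyIntegrable.ae_hasDerivAt_integral hf.locallyIntegrable] with x hx
  have hW : W f = fun y => W f 0 + ∫ t in (0:ℝ)..y, f t :=
    funext (W_eq_add_intervalIntegral hf 0)
  rw [hW]
  exact ((hx 0).const_add _).deriv

theorem intervalIntegral_W_eq (hf : Integrable f) (a b : ℝ) :
    ∫ y in a..b, W f y = b * W f b - a * W f a - ∫ t in a..b, t * f t := by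
  have hibp := (absolutelyContinuousOnInterval_W hf a b).integral_mul_deriv_eq_deriv_mul
    (contDiffOn_id (s := Set.uIcc a b)).absolutelyContinuousOnInterval
  simp only [deriv_id, id, mul_one] at hibp
  rw [hibp, intervalIntegral.integral_congr_ae (g := fun t => t * f t)]
  · ring
  · filter_upwards [ae_deriv_W hf] with t ht _
    rw [ht, mul_comm]

theorem W_eq_neg_integral_Ioi (hf : Integrable f) (h0 : ∫ x, f x = 0) (x : ℝ) :
    W f x = -∫ t in Set.Ioi x, f t := by
  rw [eq_neg_iff_add_eq_zero, W,
    intervalIntegral.integral_Iic_add_Ioi hf.integrableOn hf.integrableOn, h0]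

theorem tendsto_mul_integral_Ioi_atTop (hf : AEStronglyMeasurable f)
    (hm : Integrable fun t => t * f t) :
    Tendsto (fun x => x * ∫ t in Set.Ioi x, f t) atTop (𝓝 0) := by
  have hF : ∀ x : ℝ,
      x * ∫ t in Set.Ioi x, f t = ∫ t, (Set.Ioi x).indicator (fun t => x * f t) t :=
    fun x => by rw [integral_indicator measurableSet_Ioi, integral_const_mul]
  simp_rw [hF]
  rw [← integral_zero ℝ ℝ]
  refine tendsto_integral_filter_of_dominated_convergence (fun t => ‖t * f t‖)
    (Eventually.of_forall fun x => ((hf.const_mul x).indicator measurableSet_Ioi)) ?_ hm.norm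
    (Eventually.of_forall fun t => ?_)
  · filter_upwards [eventually_ge_atTop 0] with x hx
    refine Eventually.of_forall fun t => ?_
    by_cases ht : t ∈ Set.Ioi x
    · rw [Set.indicator_of_mem ht, norm_mul, norm_mul]
      gcongr
      rw [Real.norm_of_nonneg hx, Real.norm_of_nonneg (hx.trans ht.out.le)]
      exact ht.out.le
    · rw [Set.indicator_of_notMem ht, norm_zero]
      positivity
  · refine tendsto_const_nhds.congr' ?_
    filter_upwards [eventually_ge_atTop t] with x hx
    rw [Set.indicator_of_notMem (by simpa using hx)]

theorem tendsto_mul_integral_Iic_atBot (hf : AEStronglyMeasurable f)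
    (hm : Integrable fun t => t * f t) :
    Tendsto (fun x => x * ∫ t in Set.Iic x, f t) atBot (𝓝 0) := by
  have hF : ∀ x : ℝ,
      x * ∫ t in Set.Iic x, f t = ∫ t, (Set.Iic x).indicator (fun t => x * f t) t :=
    fun x => by rw [integral_indicator measurableSet_Iic, integral_const_mul]
  simp_rw [hF]
  rw [← integral_zero ℝ ℝ]
  refine tendsto_integral_filter_of_dominated_convergence (fun t => ‖t * f t‖)
    (Eventually.of_forall fun x => ((hf.const_mul x).indicator measurableSet_Iic)) ?_ hm.norm
    (Eventually.of_forall fun t => ?_)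
  · filter_upwards [eventually_le_atBot 0] with x hx
    refine Eventually.of_forall fun t => ?_
    by_cases ht : t ∈ Set.Iic x
    · rw [Set.indicator_of_mem ht, norm_mul, norm_mul]
      gcongr
      rw [Real.norm_of_nonpos hx, Real.norm_of_nonpos (ht.out.trans hx)]
      exact neg_le_neg ht.out
    · rw [Set.indicator_of_notMem ht, norm_zero]
      positivity
  · refine tendsto_const_nhds.congr' ?_
    filter_upwards [eventually_lt_atBot t] with x hx
    rw [Set.indicator_of_notMem (by simpa using hx)]

theorem Phi_eq_mul_W_sub (hf : Integrable f) (x : ℝ) :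
    Phi f x = -4 * π * (x * W f x - ∫ t in (0:ℝ)..x, t * f t) := by
  rw [Phi, intervalIntegral_W_eq hf, zero_mul, sub_zero]

end

/-- For neutral `f` with finite first moment, `Φ_f` has finite limits at `±∞`, and the
dipolar moment `Φ_f(+∞) - Φ_f(-∞)` equals `4π ∫ y f(y) dy`. -/
theorem stmt5 (f : ℝ → ℝ) (hf : Integrable f) (h0 : ∫ x, f x = 0)
    (hm : Integrable (fun x => |x| * f x)) :
    Tendsto (Phi f) atTop (nhds (4 * π * ∫ y in Set.Ioi (0:ℝ), y * f y)) ∧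
    Tendsto (Phi f) atBot (nhds (-4 * π * ∫ y in Set.Iio (0:ℝ), y * f y)) ∧
    (4 * π * ∫ y in Set.Ioi (0:ℝ), y * f y) - (-4 * π * ∫ y in Set.Iio (0:ℝ), y * f y)
      = 4 * π * ∫ y, y * f y := by
  have hmoment : Integrable fun t => t * f t :=
    hm.mono (aestronglyMeasurable_id.mul hf.1) (ae_of_all _ fun t => by simp)
  rw [show Phi f = _ from funext (Phi_eq_mul_W_sub hf)]
  refine ⟨?_, ?_, ?_⟩
  · have hW : Tendsto (fun x => x * W f x) atTop (𝓝 0) := by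
      simpa [W_eq_neg_integral_Ioi hf h0] using (tendsto_mul_integral_Ioi_atTop hf.1 hmoment).neg
    have hI : Tendsto (fun x => ∫ t in (0:ℝ)..x, t * f t) atTop
        (𝓝 (∫ t in Set.Ioi 0, t * f t)) :=
      intervalIntegral_tendsto_integral_Ioi 0 hmoment.integrableOn tendsto_id
    convert (hW.sub hI).const_mul (-4 * π) using 2
    ring
  · have hI : Tendsto (fun x => ∫ t in x..0, t * f t) atBot
        (𝓝 (∫ t in Set.Iio 0, t * f t)) := by
      rw [← integral_Iic_eq_integral_Iio]
      exact intervalIntegral_tendsto_integral_Iic 0 hmoment.integrableOn tendsto_id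
    convert ((tendsto_mul_integral_Iic_atBot hf.1 hmoment).add hI).const_mul (-4 * π) using 2
    · rw [W, intervalIntegral.integral_symm 0]
      ring
    · ring
  · rw [← intervalIntegral.integral_Iic_add_Ioi hmoment.integrableOn hmoment.integrableOn,
      integral_Iic_eq_integral_Iio]
    ring
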